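/- arXiv:1304.0126 — 2 statements merged into one kernel-verified Lean document; each statement's English description precedes it below -/
import Mathlib

section
/- Every Leibniz 2-cocycle φ of NF^n with values in NF^n has the form: φ(x_j, x_1) = Σ_{k=1}^n a_{j,k} x_k for 1 ≤ j ≤ n-1, φ(x_n, x_1) = Σ_{k=2}^n a_{n,k} x_k (i.e. a_{n,1} = 0), and φ(x_i, x_{j+1}) = -a_{j,1} x_{i+1} for 1 ≤ i ≤ n-1, 1 ≤ j ≤ n-1, with all other values on basis pairs zero; here the scalars a_{j,k} are arbitrary. -/
variable (K : Type*) [Field K] [CharZero K]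

/-- The bracket of the null-filiform Leibniz algebra `NF^n` in the (zero-indexed)
basis `x_{i+1} = Pi.single i 1`: `[x_i, x_1] = x_{i+1}`, all other products of
basis vectors zero. -/
def nfF (n : ℕ) (u v : Fin n → K) : Fin n → K :=
  fun k => if h : 0 < (k : ℕ) then
    v ⟨0, k.pos⟩ * u ⟨(k : ℕ) - 1, lt_of_le_of_lt (Nat.sub_le _ _) k.isLt⟩
  else 0

/-- The bracket of `NF^n` as a bilinear map. -/
noncomputable def nfb (n : ℕ) :
    (Fin n → K) →ₗ[K] (Fin n → K) →ₗ[K] (Fin n → K) :=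
  LinearMap.mk₂ K (nfF K n)
    (fun u u' v => by funext k; simp only [nfF, Pi.add_apply]; split_ifs <;> ring)
    (fun c u v => by
      funext k; simp only [nfF, Pi.smul_apply, smul_eq_mul]; split_ifs <;> ring)
    (fun u v v' => by funext k; simp only [nfF, Pi.add_apply]; split_ifs <;> ring)
    (fun c u v => by
      funext k; simp only [nfF, Pi.smul_apply, smul_eq_mul]; split_ifs <;> ring)

/-- The Leibniz 2-cocycle condition `d²φ = 0` on `NF^n` with coefficients in itself. -/
def IsCocycle (n : ℕ) (φ : (Fin n → K) →ₗ[K] (Fin n → K) →ₗ[K] (Fin n → K)) : Prop :=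
  ∀ x y z : Fin n → K,
    nfb K n x (φ y z) - nfb K n (φ x y) z + nfb K n (φ x z) y
      + φ x (nfb K n y z) - φ (nfb K n x y) z + φ (nfb K n x z) y = 0

/-- The space `ZL²(NF^n, NF^n)` of Leibniz 2-cocycles. -/
noncomputable def ZL2 (n : ℕ) :
    Submodule K ((Fin n → K) →ₗ[K] (Fin n → K) →ₗ[K] (Fin n → K)) where
  carrier := {φ | IsCocycle K n φ}
  add_mem' := by
    intro φ ψ hφ hψ x y z
    have h1 := hφ x y z
    have h2 := hψ x y z
    simp only [LinearMap.add_apply, map_add] at *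
    linear_combination h1 + h2
  zero_mem' := by intro x y z; simp
  smul_mem' := by
    intro c φ hφ x y z
    have h := hφ x y z
    simp only [LinearMap.smul_apply, map_smul] at *
    linear_combination (norm := module) c • h

lemma nfb_apply (n : ℕ) (u v : Fin n → K) (k : Fin n) :
    nfb K n u v k = if h : 0 < (k : ℕ) then
    v ⟨0, k.pos⟩ * u ⟨(k : ℕ) - 1, lt_of_le_of_lt (Nat.sub_le _ _) k.isLt⟩
  else 0 := rfl

lemma nfb_single_left (n : ℕ) (i : Fin n) (w : Fin n → K) :
    nfb K n (Pi.single i 1) w = fun l : Fin n =>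
      if (l : ℕ) = (i : ℕ) + 1 then w ⟨0, i.pos⟩ else 0 := by
  funext l
  rw [nfb_apply]
  rcases l with ⟨l, hl⟩
  split_ifs with h1 h2 h2 <;>
    simp_all [Pi.single_apply, Fin.ext_iff] <;> omega

lemma nfb_right_ne (n : ℕ) (w : Fin n → K) (j : Fin n) (hj : 0 < (j : ℕ)) :
    nfb K n w (Pi.single j 1) = 0 := by
  funext l
  rw [nfb_apply]
  split_ifs with h1
  · rw [Pi.single_apply]
    rw [if_neg (by simp [Fin.ext_iff]; omega)]
    simp
  · rfl

lemma nfb_right_e0 (n : ℕ) (j : Fin n) (hj : (j : ℕ) = 0) (w : Fin n → K) :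
    nfb K n w (Pi.single j 1) = fun l : Fin n =>
      if h : 0 < (l : ℕ) then w ⟨(l : ℕ) - 1, lt_of_le_of_lt (Nat.sub_le _ _) l.isLt⟩ else 0 := by
  funext l
  rw [nfb_apply]
  split_ifs with h1
  · rw [Pi.single_apply, if_pos (Fin.ext (by simp [hj])), one_mul]
  · rfl

lemma nfb_single_single (n : ℕ) (i j k : Fin n) (hj : (j : ℕ) = 0)
    (hk : (k : ℕ) = (i : ℕ) + 1) :
    nfb K n (Pi.single i 1) (Pi.single j 1) = Pi.single k 1 := by
  rw [nfb_single_left]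
  funext l
  rw [Pi.single_apply, if_pos (Fin.ext (by simp [hj]))]
  rw [Pi.single_apply]
  by_cases h : (l : ℕ) = (i : ℕ) + 1
  · rw [if_pos h, if_pos (Fin.ext (by omega))]
  · rw [if_neg h, if_neg (by simp [Fin.ext_iff]; omega)]

lemma nfb_single_single_top (n : ℕ) (i j : Fin n) (hj : (j : ℕ) = 0)
    (h : (i : ℕ) + 1 = n) :
    nfb K n (Pi.single i 1) (Pi.single j 1) = 0 := by
  rw [nfb_single_left]
  funext l
  rw [if_neg (by omega)]
  rfl

lemma key (n : ℕ) (hn : n ≥ 2) (φ : (Fin n → K) →ₗ[K] (Fin n → K) →ₗ[K] (Fin n → K))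
    (hφ : IsCocycle K n φ) :
    ∀ (m : ℕ) (i j j' : Fin n), (j : ℕ) = m + 1 → (j' : ℕ) = m →
      φ (Pi.single i 1) (Pi.single j 1) = fun l : Fin n =>
        if (l : ℕ) = (i : ℕ) + 1 then
          -(φ (Pi.single j' 1) (Pi.single (⟨0, by omega⟩ : Fin n) 1) ⟨0, by omega⟩)
        else 0 := by
  intro m
  induction m with
  | zero =>
    intro i j j' hj hj'
    have h := hφ (Pi.single i 1) (Pi.single j' 1) (Pi.single j' 1)
    rw [nfb_single_single K n j' j' j hj' (by omega)] at h
    have h2 : φ (Pi.single i 1) (Pi.single j 1)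
        = -(nfb K n (Pi.single i 1) (φ (Pi.single j' 1) (Pi.single j' 1))) := by
      linear_combination h
    rw [h2, nfb_single_left]
    funext l
    simp only [Pi.neg_apply]
    have hj'e : j' = (⟨0, by omega⟩ : Fin n) := Fin.ext (by simp [hj'])
    rw [hj'e]
    split_ifs with hc
    · rfl
    · exact neg_zero
  | succ m ih =>
    intro i j j' hj hj'
    have h := hφ (Pi.single i 1) (Pi.single j' 1) (Pi.single (⟨0, by omega⟩ : Fin n) 1)
    have hm2 : m + 2 ≤ n := by omega
    set j'' : Fin n := ⟨m, by omega⟩ with hj''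
    rw [nfb_right_ne K n _ j' (by omega)] at h
    rw [nfb_right_ne K n _ j' (by omega)] at h
    simp only [map_zero, LinearMap.zero_apply] at h
    rw [nfb_single_single K n j' ⟨0, by omega⟩ j rfl (by omega)] at h
    rw [ih i j' j'' (by omega) rfl] at h
    rw [nfb_right_e0 K n _ rfl] at h
    rw [nfb_single_left] at h
    by_cases hi : (i : ℕ) + 1 < n
    · rw [nfb_single_single K n i ⟨0, by omega⟩ ⟨(i : ℕ) + 1, hi⟩ rfl rfl] at h
      rw [ih ⟨(i : ℕ) + 1, hi⟩ j' j'' (by omega) rfl] at h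
      funext l
      have hl := congrFun h l
      simp only [Pi.add_apply, Pi.sub_apply, Pi.zero_apply, Pi.neg_apply, Fin.val_mk] at hl ⊢
      split_ifs at hl ⊢ <;>
        first
          | linear_combination hl
          | (exfalso; omega)
    · rw [nfb_single_single_top K n i ⟨0, by omega⟩ rfl (by omega)] at h
      simp only [map_zero, LinearMap.zero_apply] at h
      funext l
      have hl := congrFun h l
      simp only [Pi.add_apply, Pi.sub_apply, Pi.zero_apply, Pi.neg_apply, Fin.val_mk] at hl ⊢
      split_ifs at hl ⊢ <;>
        first
          | linear_combination hl
          | (exfalso; omega)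

lemma a_top (n : ℕ) (hn : n ≥ 2) (φ : (Fin n → K) →ₗ[K] (Fin n → K) →ₗ[K] (Fin n → K))
    (hφ : IsCocycle K n φ) :
    φ (Pi.single (⟨n - 1, by omega⟩ : Fin n) 1) (Pi.single (⟨0, by omega⟩ : Fin n) 1)
      ⟨0, by omega⟩ = 0 := by
  have h := hφ (Pi.single (⟨0, by omega⟩ : Fin n) 1)
    (Pi.single (⟨n - 1, by omega⟩ : Fin n) 1) (Pi.single (⟨0, by omega⟩ : Fin n) 1)
  rw [nfb_right_ne K n _ ⟨n - 1, by omega⟩ (by simp only [Fin.val_mk]; omega)] at h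
  rw [nfb_right_ne K n _ ⟨n - 1, by omega⟩ (by simp only [Fin.val_mk]; omega)] at h
  simp only [map_zero, LinearMap.zero_apply] at h
  rw [nfb_single_single_top K n ⟨n - 1, by omega⟩ ⟨0, by omega⟩ rfl (by simp only [Fin.val_mk]; omega)] at h
  simp only [map_zero] at h
  rw [nfb_single_single K n ⟨0, by omega⟩ ⟨0, by omega⟩ ⟨1, by omega⟩ rfl rfl] at h
  rw [key K n hn φ hφ (n - 2) ⟨1, by omega⟩ ⟨n - 1, by omega⟩ ⟨n - 2, by omega⟩
    (by simp only [Fin.val_mk]; omega) rfl] at h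
  rw [key K n hn φ hφ (n - 2) ⟨0, by omega⟩ ⟨n - 1, by omega⟩ ⟨n - 2, by omega⟩
    (by simp only [Fin.val_mk]; omega) rfl] at h
  rw [nfb_right_e0 K n _ rfl] at h
  rw [nfb_single_left] at h
  have hl := congrFun h ⟨1, by omega⟩
  simp only [Pi.add_apply, Pi.sub_apply, Pi.zero_apply, Pi.neg_apply, Fin.val_mk] at hl
  split_ifs at hl <;>
    first | contradiction | linear_combination hl | (exfalso; omega)

noncomputable def coT (n : ℕ) (φ : (Fin n → K) →ₗ[K] (Fin n → K) →ₗ[K] (Fin n → K)) :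
    (Fin n → K) →ₗ[K] (Fin n → K) →ₗ[K] (Fin n → K) →ₗ[K] (Fin n → K) where
  toFun x := LinearMap.mk₂ K (fun y z =>
      nfb K n x (φ y z) - nfb K n (φ x y) z + nfb K n (φ x z) y
      + φ x (nfb K n y z) - φ (nfb K n x y) z + φ (nfb K n x z) y)
    (fun y y' z => by simp only [map_add, LinearMap.add_apply]; abel)
    (fun c y z => by simp only [map_smul, LinearMap.smul_apply]; module)
    (fun z z' y => by simp only [map_add, LinearMap.add_apply]; abel)
    (fun c z y => by simp only [map_smul, LinearMap.smul_apply]; module)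
  map_add' x x' := by
    apply LinearMap.ext; intro y; apply LinearMap.ext; intro z
    simp only [LinearMap.mk₂_apply, LinearMap.add_apply, map_add]
    abel
  map_smul' c x := by
    apply LinearMap.ext; intro y; apply LinearMap.ext; intro z
    simp only [LinearMap.mk₂_apply, LinearMap.smul_apply, map_smul, RingHom.id_apply]
    module

lemma coT_apply (n : ℕ) (φ : (Fin n → K) →ₗ[K] (Fin n → K) →ₗ[K] (Fin n → K))
    (x y z : Fin n → K) :
    coT K n φ x y z =
      nfb K n x (φ y z) - nfb K n (φ x y) z + nfb K n (φ x z) y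
      + φ x (nfb K n y z) - φ (nfb K n x y) z + φ (nfb K n x z) y := rfl

lemma isCocycle_of_basis (n : ℕ) (φ : (Fin n → K) →ₗ[K] (Fin n → K) →ₗ[K] (Fin n → K))
    (h : ∀ i j k : Fin n, coT K n φ (Pi.single i 1) (Pi.single j 1) (Pi.single k 1) = 0) :
    IsCocycle K n φ := by
  have hT : coT K n φ = 0 := by
    apply Module.Basis.ext (Pi.basisFun K (Fin n)); intro i
    apply Module.Basis.ext (Pi.basisFun K (Fin n)); intro j
    apply Module.Basis.ext (Pi.basisFun K (Fin n)); intro k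
    simp only [Pi.basisFun_apply, LinearMap.zero_apply, h]
  intro x y z
  have h2 := LinearMap.congr_fun (LinearMap.congr_fun (LinearMap.congr_fun hT x) y) z
  rw [coT_apply] at h2
  simpa using h2

lemma backward (n : ℕ) (hn : n ≥ 2) (φ : (Fin n → K) →ₗ[K] (Fin n → K) →ₗ[K] (Fin n → K))
    (a : Fin n → Fin n → K)
    (ha0 : a ⟨n - 1, by omega⟩ ⟨0, by omega⟩ = 0)
    (h1 : ∀ i : Fin n,
      φ (Pi.single i 1) (Pi.single (⟨0, by omega⟩ : Fin n) 1) = fun l => a i l)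
    (h2 : ∀ i j : Fin n, 0 < (j : ℕ) →
      φ (Pi.single i 1) (Pi.single j 1) = fun l : Fin n =>
        if (l : ℕ) = (i : ℕ) + 1 then
          -(a ⟨(j : ℕ) - 1, lt_of_le_of_lt (Nat.sub_le _ _) j.isLt⟩ ⟨0, by omega⟩)
        else 0) :
    IsCocycle K n φ := by
  have h1' : ∀ (i j : Fin n), (j : ℕ) = 0 →
      φ (Pi.single i 1) (Pi.single j 1) = fun l => a i l := by
    intro i j hj
    have : j = ⟨0, by omega⟩ := Fin.ext (by simp [hj])
    rw [this]; exact h1 i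
  have ha0' : ∀ (j : Fin n) (z : Fin n), (j : ℕ) = n - 1 → (z : ℕ) = 0 → a j z = 0 := by
    intro j z hj hz
    have e1 : j = ⟨n - 1, by omega⟩ := Fin.ext (by simp [hj])
    have e2 : z = ⟨0, by omega⟩ := Fin.ext (by simp [hz])
    rw [e1, e2]; exact ha0
  apply isCocycle_of_basis
  intro i j k
  rw [coT_apply]
  rcases Nat.eq_zero_or_pos (j : ℕ) with hj | hj <;>
    rcases Nat.eq_zero_or_pos (k : ℕ) with hk | hk
  · -- j = 0, k = 0
    rw [h1' j k hk, h1' i j hj, h1' i k hk]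
    rw [nfb_single_single K n j k ⟨(j : ℕ) + 1, by omega⟩ hk rfl]
    rw [h2 i ⟨(j : ℕ) + 1, by omega⟩ (by simp only [Fin.val_mk]; omega)]
    by_cases hi : (i : ℕ) + 1 < n
    · rw [nfb_single_single K n i j ⟨(i : ℕ) + 1, hi⟩ hj rfl,
        nfb_single_single K n i k ⟨(i : ℕ) + 1, hi⟩ hk rfl]
      rw [h1' ⟨(i : ℕ) + 1, hi⟩ k hk, h1' ⟨(i : ℕ) + 1, hi⟩ j hj]
      rw [nfb_single_left, nfb_right_e0 K n k hk, nfb_right_e0 K n j hj]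
      funext l
      simp only [Pi.add_apply, Pi.sub_apply, Pi.zero_apply, Pi.neg_apply, Fin.val_mk,
        Nat.add_sub_cancel, Fin.eta]
      split_ifs <;> first | (exfalso; omega) | contradiction | ring
    · rw [nfb_single_single_top K n i j hj (by omega),
        nfb_single_single_top K n i k hk (by omega)]
      simp only [map_zero, LinearMap.zero_apply]
      rw [nfb_single_left, nfb_right_e0 K n k hk, nfb_right_e0 K n j hj]
      funext l
      simp only [Pi.add_apply, Pi.sub_apply, Pi.zero_apply, Pi.neg_apply, Fin.val_mk,
        Nat.add_sub_cancel, Fin.eta]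
      split_ifs <;> first | (exfalso; omega) | contradiction | ring
  · -- j = 0, k ≥ 1
    rw [h2 j k hk, h1' i j hj, h2 i k hk]
    rw [nfb_right_ne K n _ k hk]
    rw [nfb_right_ne K n _ k hk]
    rw [nfb_right_ne K n _ k hk]
    simp only [map_zero, LinearMap.zero_apply]
    by_cases hi : (i : ℕ) + 1 < n
    · rw [nfb_single_single K n i j ⟨(i : ℕ) + 1, hi⟩ hj rfl]
      rw [h2 ⟨(i : ℕ) + 1, hi⟩ k hk]
      rw [nfb_single_left, nfb_right_e0 K n j hj]
      funext l
      simp only [Pi.add_apply, Pi.sub_apply, Pi.zero_apply, Pi.neg_apply, Fin.val_mk,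
        Nat.add_sub_cancel, Fin.eta]
      split_ifs <;> first | (exfalso; omega) | contradiction | ring
    · rw [nfb_single_single_top K n i j hj (by omega)]
      simp only [map_zero, LinearMap.zero_apply]
      rw [nfb_single_left, nfb_right_e0 K n j hj]
      funext l
      simp only [Pi.add_apply, Pi.sub_apply, Pi.zero_apply, Pi.neg_apply, Fin.val_mk,
        Nat.add_sub_cancel, Fin.eta]
      split_ifs <;> first | (exfalso; omega) | contradiction | ring
  · -- j ≥ 1, k = 0
    rw [h1' j k hk, h2 i j hj]
    rw [nfb_right_ne K n _ j hj]  -- t3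
    rw [nfb_right_ne K n _ j hj]  -- t5 inner
    simp only [map_zero, LinearMap.zero_apply]
    have ht4 : φ (Pi.single i 1) (nfb K n (Pi.single j 1) (Pi.single k 1)) = fun l : Fin n =>
        if (l : ℕ) = (i : ℕ) + 1 then -(a j ⟨0, by omega⟩) else 0 := by
      by_cases hj2 : (j : ℕ) + 1 < n
      · rw [nfb_single_single K n j k ⟨(j : ℕ) + 1, hj2⟩ hk rfl]
        rw [h2 i ⟨(j : ℕ) + 1, hj2⟩ (by simp only [Fin.val_mk]; omega)]
        funext l
        simp only [Fin.val_mk, Nat.add_sub_cancel, Fin.eta]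
      · rw [nfb_single_single_top K n j k hk (by omega)]
        simp only [map_zero]
        funext l
        rw [ha0' j _ (by omega) rfl]
        simp
    rw [ht4]
    by_cases hi : (i : ℕ) + 1 < n
    · rw [nfb_single_single K n i k ⟨(i : ℕ) + 1, hi⟩ hk rfl]
      rw [h2 ⟨(i : ℕ) + 1, hi⟩ j hj]
      rw [nfb_single_left, nfb_right_e0 K n k hk]
      funext l
      simp only [Pi.add_apply, Pi.sub_apply, Pi.zero_apply, Pi.neg_apply, Fin.val_mk,
        Nat.add_sub_cancel, Fin.eta]
      split_ifs <;> first | (exfalso; omega) | contradiction | ring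
    · rw [nfb_single_single_top K n i k hk (by omega)]
      simp only [map_zero, LinearMap.zero_apply]
      rw [nfb_single_left, nfb_right_e0 K n k hk]
      funext l
      simp only [Pi.add_apply, Pi.sub_apply, Pi.zero_apply, Pi.neg_apply, Fin.val_mk,
        Nat.add_sub_cancel, Fin.eta]
      split_ifs <;> first | (exfalso; omega) | contradiction | ring
  · -- j ≥ 1, k ≥ 1
    rw [h2 j k hk]
    rw [nfb_right_ne K n _ k hk]  -- t2
    rw [nfb_right_ne K n _ j hj]  -- t3
    rw [nfb_right_ne K n _ k hk]  -- t4 inner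
    rw [nfb_right_ne K n _ j hj]  -- t5 inner
    rw [nfb_right_ne K n _ k hk]  -- t6 inner
    simp only [map_zero, LinearMap.zero_apply]
    rw [nfb_single_left]
    funext l
    simp only [Pi.add_apply, Pi.sub_apply, Pi.zero_apply, Pi.neg_apply, Fin.val_mk]
    split_ifs <;> first | (exfalso; omega) | contradiction | ring

/-- a bilinear map `φ` is a Leibniz 2-cocycle of `NF^n` if and only if
(zero-indexed) `φ(x_j, x_1) = ∑_k a_{j,k} x_k` with `a_{n,1} = 0`,
`φ(x_i, x_{j+1}) = -a_{j,1} x_{i+1}`, all other values on basis pairs zero,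
the scalars `a_{j,k}` being arbitrary. -/
theorem cocycle_iff_form (n : ℕ) (hn : 2 ≤ n)
    (φ : (Fin n → K) →ₗ[K] (Fin n → K) →ₗ[K] (Fin n → K)) :
    IsCocycle K n φ ↔
    ∃ a : Fin n → Fin n → K,
      a ⟨n - 1, by omega⟩ ⟨0, by omega⟩ = 0 ∧
      (∀ i : Fin n,
        φ (Pi.single i 1) (Pi.single (⟨0, by omega⟩ : Fin n) 1) = fun l => a i l) ∧
      (∀ i j : Fin n, 0 < (j : ℕ) →
        φ (Pi.single i 1) (Pi.single j 1) = fun l : Fin n =>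
          if (l : ℕ) = (i : ℕ) + 1 then
            -(a ⟨(j : ℕ) - 1, lt_of_le_of_lt (Nat.sub_le _ _) j.isLt⟩ ⟨0, by omega⟩)
          else 0) := by
  constructor
  · intro hφ
    refine ⟨fun i l => φ (Pi.single i 1) (Pi.single (⟨0, by omega⟩ : Fin n) 1) l,
      ?_, ?_, ?_⟩
    · exact a_top K n hn φ hφ
    · intro i; rfl
    · intro i j hj
      exact key K n hn φ hφ ((j : ℕ) - 1) i j
        ⟨(j : ℕ) - 1, lt_of_le_of_lt (Nat.sub_le _ _) j.isLt⟩ (by omega) rfl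
  · rintro ⟨a, ha0, h1, h2⟩
    exact backward K n hn φ a ha0 h1 h2
end

section
/- A 2-cocycle φ ∈ ZL²(NF^n, NF^n) satisfies the integrability condition φ(x, φ(y,z)) - φ(φ(x,y), z) + φ(φ(x,z), y) = 0 for all x,y,z if and only if φ is a linear combination of the cocycles φ_{j,k} (1 ≤ j ≤ n, 2 ≤ k ≤ n) given by φ_{j,k}(x_j, x_1) = x_k; equivalently, if and only if the coefficients of all ψ_j in its expansion vanish, where ψ_j is defined by ψ_j(x_j, x_1) = x_1 and ψ_j(x_i, x_{j+1}) = -x_{i+1} for 1 ≤ i ≤ n-1. -/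
variable (K : Type*) [Field K] [CharZero K]

/-- ℕ-indexed basis of `Fin n → K`, zero out of range. -/
def EE (n : ℕ) (m : ℕ) : Fin n → K := if h : m < n then Pi.single ⟨m, h⟩ 1 else 0

lemma EE_coe (n : ℕ) (i : Fin n) : (Pi.single i 1 : Fin n → K) = EE K n (i : ℕ) := by
  rw [EE, dif_pos i.isLt]

lemma EE_of_ge (n m : ℕ) (h : n ≤ m) : EE K n m = 0 := by
  rw [EE, dif_neg (by omega)]

lemma EE_apply (n m : ℕ) (k : Fin n) : EE K n m k = if (k : ℕ) = m then 1 else 0 := by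
  by_cases h1 : m < n
  · rw [EE, dif_pos h1, Pi.single_apply]
    simp [Fin.ext_iff]
  · rw [EE, dif_neg h1, if_neg (by omega)]
    rfl

lemma nfb_EE_left (n : ℕ) (hn : 0 < n) (a : ℕ) (v : Fin n → K) :
    nfb K n (EE K n a) v = v ⟨0, hn⟩ • EE K n (a + 1) := by
  funext k
  simp only [nfb, LinearMap.mk₂_apply, nfF, Pi.smul_apply, smul_eq_mul]
  rcases Nat.eq_zero_or_pos (k : ℕ) with hk | hk
  · rw [dif_neg (by omega), EE_apply]
    rw [if_neg (by omega), mul_zero]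
  · rw [dif_pos hk, EE_apply, EE_apply]
    simp only [Fin.val_mk]
    by_cases h : (k:ℕ) = a + 1
    · rw [if_pos (by omega), if_pos h]
    · rw [if_neg (by omega), if_neg h, mul_zero]

lemma nfb_right_zero (n : ℕ) (u : Fin n → K) (c : ℕ) (hc : 1 ≤ c) :
    nfb K n u (EE K n c) = 0 := by
  funext k
  simp only [nfb, LinearMap.mk₂_apply, nfF, Pi.zero_apply]
  split_ifs with h
  · rw [EE_apply]
    simp only [Fin.val_mk]
    rw [if_neg (by omega), zero_mul]
  · rfl

lemma nfb_EE_EE (n : ℕ) (hn : 0 < n) (a b : ℕ) :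
    nfb K n (EE K n a) (EE K n b) = if b = 0 then EE K n (a + 1) else 0 := by
  rcases Nat.eq_zero_or_pos b with hb | hb
  · subst hb
    rw [if_pos rfl, nfb_EE_left K n hn, EE_apply, if_pos rfl, one_smul]
  · rw [if_neg (by omega), nfb_right_zero K n _ b hb]

noncomputable def cC (n : ℕ) (φ : (Fin n → K) →ₗ[K] (Fin n → K) →ₗ[K] (Fin n → K)) : ℕ → K :=
  fun i => if h : 0 < n then φ (EE K n i) (EE K n 0) ⟨0, h⟩ else 0

lemma cC_eq (n : ℕ) (hn : 0 < n) (φ : (Fin n → K) →ₗ[K] (Fin n → K) →ₗ[K] (Fin n → K)) (i : ℕ) :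
    cC K n φ i = φ (EE K n i) (EE K n 0) ⟨0, hn⟩ := dif_pos hn

lemma phi_EE_pos (n : ℕ) (hn : 2 ≤ n) (φ : (Fin n → K) →ₗ[K] (Fin n → K) →ₗ[K] (Fin n → K))
    (hφ : IsCocycle K n φ) (j : ℕ) (hj : 1 ≤ j) :
    ∀ a, φ (EE K n a) (EE K n j) = -(cC K n φ (j-1)) • EE K n (a+1) := by
  have h0 : 0 < n := by omega
  induction j, hj using Nat.le_induction with
  | base =>
    intro a
    have hb1 : nfb K n (EE K n 0) (EE K n 0) = EE K n 1 := by rw [nfb_EE_EE K n h0]; simp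
    have hb2 : nfb K n (EE K n a) (EE K n 0) = EE K n (a+1) := by rw [nfb_EE_EE K n h0]; simp
    have h := hφ (EE K n a) (EE K n 0) (EE K n 0)
    rw [hb1, hb2, nfb_EE_left K n h0 a (φ (EE K n 0) (EE K n 0)), ← cC_eq K n h0] at h
    linear_combination (norm := module) h
  | succ j hj IH =>
    intro a
    have hb1 : nfb K n (EE K n j) (EE K n 0) = EE K n (j+1) := by rw [nfb_EE_EE K n h0]; simp
    have hb2 : nfb K n (EE K n a) (EE K n 0) = EE K n (a+1) := by rw [nfb_EE_EE K n h0]; simp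
    have hb3 : nfb K n (EE K n a) (EE K n j) = 0 := by
      rw [nfb_EE_EE K n h0, if_neg (by omega)]
    have hb4 : nfb K n (EE K n (a+1)) (EE K n 0) = EE K n (a+1+1) := by
      rw [nfb_EE_EE K n h0]; simp
    have h := hφ (EE K n a) (EE K n j) (EE K n 0)
    rw [hb1, hb2, hb3, nfb_EE_left K n h0 a (φ (EE K n j) (EE K n 0)), ← cC_eq K n h0,
        nfb_right_zero K n _ j hj, IH a, IH (a+1)] at h
    simp only [map_smul, LinearMap.smul_apply, map_zero, LinearMap.zero_apply] at h
    rw [hb4] at h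
    rw [Nat.add_sub_cancel]
    linear_combination (norm := module) h

lemma pi_expand (n : ℕ) (u : Fin n → K) : u = ∑ i, u i • (Pi.single i 1 : Fin n → K) := by
  conv_lhs => rw [← Finset.univ_sum_single u]
  exact Finset.sum_congr rfl fun i _ => by ext j; simp [Pi.single_apply]

/-- H2: second argument `EE m` with `m ≥ 1` kills the 0-component. -/
lemma phi_comp0_right (n : ℕ) (hn : 2 ≤ n) (φ : (Fin n → K) →ₗ[K] (Fin n → K) →ₗ[K] (Fin n → K))
    (hφ : IsCocycle K n φ) (m : ℕ) (hm : 1 ≤ m) (u : Fin n → K) :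
    (φ u (EE K n m)) ⟨0, by omega⟩ = 0 := by
  have h0 : 0 < n := by omega
  conv_lhs => rw [pi_expand K n u]
  simp only [map_sum, map_smul, LinearMap.sum_apply, LinearMap.smul_apply, Finset.sum_apply,
    Pi.smul_apply, smul_eq_mul]
  refine Finset.sum_eq_zero fun i _ => ?_
  rw [EE_coe, phi_EE_pos K n hn φ hφ m hm, Pi.smul_apply, EE_apply]
  simp only [Fin.val_mk]
  rw [if_neg (by omega)]
  simp

/-- H1: 0-component of `φ (EE a) v`. -/
lemma phi_comp0_left (n : ℕ) (hn : 2 ≤ n) (φ : (Fin n → K) →ₗ[K] (Fin n → K) →ₗ[K] (Fin n → K))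
    (hφ : IsCocycle K n φ) (a : ℕ) (v : Fin n → K) :
    (φ (EE K n a) v) ⟨0, by omega⟩ = v ⟨0, by omega⟩ * cC K n φ a := by
  have h0 : 0 < n := by omega
  have key : ∀ k : Fin n, (φ (EE K n a) (Pi.single k 1)) ⟨0, h0⟩
      = if k = ⟨0, h0⟩ then cC K n φ a else 0 := by
    intro k
    rw [EE_coe]
    by_cases hk : (k : ℕ) = 0
    · have hk' : k = ⟨0, h0⟩ := Fin.ext hk
      rw [if_pos hk', hk]
      exact (cC_eq K n h0 φ a).symm
    · rw [if_neg (fun hc => hk (by rw [hc])), phi_EE_pos K n hn φ hφ (k:ℕ) (by omega) a,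
        Pi.smul_apply, EE_apply]
      simp only [Fin.val_mk]
      rw [if_neg (by omega)]
      simp
  conv_lhs => rw [pi_expand K n v]
  simp only [map_sum, LinearMap.map_smul, Finset.sum_apply, Pi.smul_apply, smul_eq_mul]
  rw [Finset.sum_congr rfl (fun k _ => by rw [key k])]
  simp [Finset.sum_ite_eq', mul_comm]

section quad
variable (n : ℕ) (hn : 2 ≤ n) (φ : (Fin n → K) →ₗ[K] (Fin n → K) →ₗ[K] (Fin n → K))
  (hφ : IsCocycle K n φ)
  (hI : ∀ x y z : Fin n → K, φ x (φ y z) - φ (φ x y) z + φ (φ x z) y = 0)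

include hn hφ hI

lemma quad0 (a : ℕ) : cC K n φ 0 * cC K n φ a = 0 := by
  have h0 : 0 < n := by omega
  have h := congrFun (hI (EE K n a) (EE K n 0) (EE K n 0)) ⟨0, h0⟩
  simp only [Pi.sub_apply, Pi.add_apply, Pi.zero_apply] at h
  rw [phi_comp0_left K n hn φ hφ a, ← cC_eq K n h0] at h
  linear_combination h

lemma quad1 (m : ℕ) (hm : 1 ≤ m) (a : ℕ) :
    cC K n φ m * cC K n φ a + cC K n φ (m-1) * cC K n φ (a+1) = 0 := by
  have h0 : 0 < n := by omega
  have h := congrFun (hI (EE K n a) (EE K n m) (EE K n 0)) ⟨0, h0⟩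
  simp only [Pi.sub_apply, Pi.add_apply, Pi.zero_apply] at h
  rw [phi_comp0_left K n hn φ hφ a (φ (EE K n m) (EE K n 0))] at h
  rw [phi_EE_pos K n hn φ hφ m hm a] at h
  simp only [map_smul, LinearMap.smul_apply, Pi.smul_apply, smul_eq_mul] at h
  rw [phi_comp0_right K n hn φ hφ m hm] at h
  simp only [← cC_eq K n h0] at h
  linear_combination h

lemma c_all_zero : ∀ m, cC K n φ m = 0 := by
  have h0 : 0 < n := by omega
  have key : ∀ t m, n ≤ m + t → cC K n φ m = 0 := by
    intro t
    induction t with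
    | zero =>
      intro m hm
      rw [cC_eq K n h0, EE_of_ge K n m (by omega)]
      simp
    | succ t IH =>
      intro m hm
      by_cases h : n ≤ m + t
      · exact IH m h
      · rcases Nat.eq_zero_or_pos m with h2 | h2
        · subst h2
          exact mul_self_eq_zero.mp (quad0 K n hn φ hφ hI 0)
        · have hq := quad1 K n hn φ hφ hI m h2 m
          rw [IH (m+1) (by omega), mul_zero, add_zero] at hq
          exact mul_self_eq_zero.mp hq
  exact fun m => key n m (by omega)

end quad

section back
variable (n : ℕ) (hn : 2 ≤ n) (φ : (Fin n → K) →ₗ[K] (Fin n → K) →ₗ[K] (Fin n → K))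
  (a : Fin n → Fin n → K)
  (ha : ∀ i j : Fin n, φ (Pi.single i 1) (Pi.single j 1) = fun l : Fin n =>
        if (j : ℕ) = 0 ∧ 0 < (l : ℕ) then a i l else 0)
include hn ha

lemma back_bb (i j : Fin n) :
    φ (Pi.single i 1) (Pi.single j 1)
      = (Pi.single j 1 : Fin n → K) ⟨0, by omega⟩
          • φ (Pi.single i 1) (Pi.single (⟨0, by omega⟩ : Fin n) 1) := by
  have h0 : 0 < n := by omega
  by_cases hj : (j : ℕ) = 0
  · rw [show j = ⟨0, h0⟩ from Fin.ext hj]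
    rw [Pi.single_apply, if_pos rfl, one_smul]
  · rw [ha i j, Pi.single_apply, if_neg (fun hc => hj (by rw [← hc])), zero_smul]
    funext l
    rw [if_neg (fun hc => hj hc.1)]
    rfl

lemma back_xb (x : Fin n → K) (j : Fin n) :
    φ x (Pi.single j 1)
      = (Pi.single j 1 : Fin n → K) ⟨0, by omega⟩
          • φ x (Pi.single (⟨0, by omega⟩ : Fin n) 1) := by
  rw [pi_expand K n x]
  simp only [map_sum, LinearMap.sum_apply, map_smul, LinearMap.smul_apply]
  rw [Finset.smul_sum]
  refine Finset.sum_congr rfl fun i _ => ?_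
  rw [back_bb K n hn φ a ha i j, smul_comm]

lemma back_xy (x y : Fin n → K) :
    φ x y = y ⟨0, by omega⟩ • φ x (Pi.single (⟨0, by omega⟩ : Fin n) 1) := by
  have h0 : 0 < n := by omega
  conv_lhs => rw [pi_expand K n y]
  rw [map_sum]
  have step : ∀ j : Fin n, φ x (y j • (Pi.single j 1 : Fin n → K))
      = (y j * (Pi.single j 1 : Fin n → K) ⟨0, h0⟩)
          • φ x (Pi.single (⟨0, h0⟩ : Fin n) 1) := fun j => by
    rw [map_smul, back_xb K n hn φ a ha x j, smul_smul]
  rw [Finset.sum_congr rfl fun j _ => step j, ← Finset.sum_smul]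
  congr 1
  simp [Pi.single_apply, Finset.sum_ite_eq]

lemma back_z0 (x : Fin n → K) :
    (φ x (Pi.single (⟨0, by omega⟩ : Fin n) 1)) ⟨0, by omega⟩ = 0 := by
  conv_lhs => rw [pi_expand K n x]
  simp only [map_sum, LinearMap.sum_apply, map_smul, LinearMap.smul_apply, Finset.sum_apply,
    Pi.smul_apply, smul_eq_mul]
  refine Finset.sum_eq_zero fun i _ => ?_
  rw [ha i ⟨0, by omega⟩]
  simp

end back

/-- a 2-cocycle `φ` of `NF^n` satisfies the integrability condition
`φ(x, φ(y,z)) - φ(φ(x,y), z) + φ(φ(x,z), y) = 0` if and only if it is a linear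
combination of the cocycles `φ_{j,k}` (`1 ≤ j ≤ n`, `2 ≤ k ≤ n`) with
`φ_{j,k}(x_j, x_1) = x_k`; equivalently, iff `φ(x_i, x_1)` has no `x_1`-component
and `φ` vanishes on the pairs `(x_i, x_j)` with `j ≥ 2` (so that the coefficients
of all `ψ_j` in its expansion vanish). -/
theorem integrable_iff_phi_combination (n : ℕ) (hn : 2 ≤ n)
    (φ : (Fin n → K) →ₗ[K] (Fin n → K) →ₗ[K] (Fin n → K))
    (hφ : IsCocycle K n φ) :
    (∀ x y z : Fin n → K,
        φ x (φ y z) - φ (φ x y) z + φ (φ x z) y = 0) ↔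
    ∃ a : Fin n → Fin n → K, ∀ i j : Fin n,
      φ (Pi.single i 1) (Pi.single j 1) = fun l : Fin n =>
        if (j : ℕ) = 0 ∧ 0 < (l : ℕ) then a i l else 0 := by
  have h0 : 0 < n := by omega
  constructor
  · intro hI
    refine ⟨fun i l => φ (Pi.single i 1) (EE K n 0) l, fun i j => ?_⟩
    have hc := c_all_zero K n hn φ hφ hI
    by_cases hj : (j : ℕ) = 0
    · have hj' : (Pi.single j 1 : Fin n → K) = EE K n 0 := by rw [EE_coe, hj]
      rw [hj']
      funext l
      by_cases hl : 0 < (l : ℕ)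
      · rw [if_pos ⟨hj, hl⟩]
      · rw [if_neg (fun hc' => hl hc'.2)]
        have hl' : l = ⟨0, h0⟩ := Fin.ext (show (l : ℕ) = 0 by omega)
        rw [hl', EE_coe K n i, ← cC_eq K n h0, hc]
    · rw [EE_coe K n j, EE_coe K n i,
        phi_EE_pos K n hn φ hφ (j : ℕ) (by omega) (i : ℕ), hc, neg_zero, zero_smul]
      funext l
      rw [if_neg (fun hc' => hj hc'.1)]
      rfl
  · rintro ⟨a, ha⟩ x y z
    have hB := back_xy K n hn φ a ha
    have hz := back_z0 K n hn φ a ha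
    have h1 : (φ y z) ⟨0, h0⟩ = 0 := by
      rw [hB y z, Pi.smul_apply, hz y, smul_zero]
    rw [hB x (φ y z), h1, zero_smul, hB x y, hB x z]
    simp only [map_smul, LinearMap.smul_apply]
    rw [hB (φ x (Pi.single (⟨0, h0⟩ : Fin n) 1)) z,
        hB (φ x (Pi.single (⟨0, h0⟩ : Fin n) 1)) y]
    module
end
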